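/- arXiv:1107.1660 — 8 statements merged into one kernel-verified Lean document; each statement's English description precedes it below -/
import Mathlib

section
/- Given N entities with utilities U(e_i) ≥ 0, click probabilities C(e_i) ∈ (0,1], and abandonment probabilities γ(e_i) ≥ 0 with C(e_i)+γ(e_i) ≤ 1, the expected utility E(U) = Σ_{i=1}^{N} U(e_i)·C(e_i)·Π_{j=1}^{i-1}(1 − C(e_j) − γ(e_j)) is maximized over all permutations of the entities when they are arranged in descending order of CE(e) = U(e)·C(e)/(C(e)+γ(e)). -/
/-!
Write `w e = U e * C e` and `d e = 1 - C e - γ e`; the expected utility of a ranking `e₁ … e_N` is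
then `w e₁ + d e₁ * (w e₂ + d e₂ * (⋯))`. Exchanging adjacent entities `a, b` changes it by a
nonnegative multiple of `w a * (1 - d b) - w b * (1 - d a)`, whose sign is that of
`CE a - CE b` since `1 - d = C + γ > 0`. Hence moving an entity of maximal `CE` to the front never
lowers the utility, and induction on the length shows that the CE-sorted ranking is optimal.
-/

variable {α R : Type*} [CommRing R]

def cascadeValue (w d : α → R) : List α → R
  | [] => 0
  | a :: l => w a + d a * cascadeValue w d l

namespace cascadeValue

variable (w d : α → R)

@[simp]
lemma nil : cascadeValue w d [] = 0 := rfl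

@[simp]
lemma cons (a : α) (l : List α) :
    cascadeValue w d (a :: l) = w a + d a * cascadeValue w d l := rfl

theorem eq_sum_mul_prod_filter_lt {N : ℕ} (f : Fin N → α) :
    cascadeValue w d (List.ofFn f) =
      ∑ i, w (f i) * ∏ j ∈ Finset.univ.filter (· < i), d (f j) := by
  induction N with
  | zero => simp
  | succ n ih =>
    simp only [List.ofFn_succ, cons, ih, Fin.sum_univ_succ, Finset.prod_filter,
      Fin.prod_univ_succ, Fin.succ_pos, Fin.succ_lt_succ_iff, Fin.not_lt_zero, if_true,
      if_false, Finset.prod_const_one, mul_one, Finset.mul_sum]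
    congr 1
    refine Finset.sum_congr rfl fun i _ => ?_
    ring

section Ordered

variable [LinearOrder R] [IsStrictOrderedRing R]

lemma swap_le {a b : α} (l : List α) (hab : w b * (1 - d a) ≤ w a * (1 - d b)) :
    cascadeValue w d (b :: a :: l) ≤ cascadeValue w d (a :: b :: l) := by
  simp only [cons]
  linear_combination hab

lemma append_cons_le_cons_append (hd : ∀ x, 0 ≤ d x) {a : α} (u v : List α)
    (hu : ∀ b ∈ u, w b * (1 - d a) ≤ w a * (1 - d b)) :
    cascadeValue w d (u ++ a :: v) ≤ cascadeValue w d (a :: (u ++ v)) := by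
  induction u with
  | nil => rfl
  | cons b u ih =>
    have ih := ih fun x hx => hu x (List.mem_cons_of_mem b hx)
    calc cascadeValue w d (b :: u ++ a :: v)
        = w b + d b * cascadeValue w d (u ++ a :: v) := rfl
      _ ≤ w b + d b * cascadeValue w d (a :: (u ++ v)) := by gcongr; exact hd b
      _ = cascadeValue w d (b :: a :: (u ++ v)) := rfl
      _ ≤ cascadeValue w d (a :: b :: (u ++ v)) := swap_le w d _ (hu b List.mem_cons_self)

theorem le_of_perm_of_pairwise (hd : ∀ x, 0 ≤ d x) {l l' : List α} (hp : l.Perm l')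
    (hl' : l'.Pairwise fun a b => w b * (1 - d a) ≤ w a * (1 - d b)) :
    cascadeValue w d l ≤ cascadeValue w d l' := by
  induction l' generalizing l with
  | nil => rw [List.perm_nil.mp hp]
  | cons a t ih =>
    obtain ⟨u, v, rfl⟩ := List.append_of_mem (hp.symm.subset List.mem_cons_self)
    have hperm : (u ++ v).Perm t := (List.perm_middle.symm.trans hp).cons_inv
    obtain ⟨ha, ht⟩ := List.pairwise_cons.mp hl'
    calc cascadeValue w d (u ++ a :: v)
        ≤ cascadeValue w d (a :: (u ++ v)) :=
          append_cons_le_cons_append w d hd u v fun b hb =>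
            ha b (hperm.subset (List.mem_append_left v hb))
      _ ≤ cascadeValue w d (a :: t) := by
          rw [cons, cons]
          gcongr
          exacts [hd a, ih hperm ht]

end Ordered

end cascadeValue

theorem ce_ranking_optimal_general (N : ℕ) (U C γ : Fin N → ℝ)
    (hC0 : ∀ e, 0 < C e)
    (hγ : ∀ e, 0 ≤ γ e) (hsum : ∀ e, C e + γ e ≤ 1)
    (σ : Equiv.Perm (Fin N))
    (hsort : ∀ i j : Fin N, i ≤ j →
      U (σ j) * C (σ j) / (C (σ j) + γ (σ j)) ≤
        U (σ i) * C (σ i) / (C (σ i) + γ (σ i))) :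
    ∀ τ : Equiv.Perm (Fin N),
      ∑ i : Fin N, U (τ i) * C (τ i) *
          ∏ j ∈ Finset.univ.filter (fun j => j < i), (1 - C (τ j) - γ (τ j)) ≤
      ∑ i : Fin N, U (σ i) * C (σ i) *
          ∏ j ∈ Finset.univ.filter (fun j => j < i), (1 - C (σ j) - γ (σ j)) := by
  intro τ
  let w e := U e * C e
  let d e := 1 - C e - γ e
  have hd : ∀ e, 0 ≤ d e := fun e => by linarith [hsum e]
  have hsorted : (List.ofFn σ).Pairwise fun a b => w b * (1 - d a) ≤ w a * (1 - d b) := by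
    refine List.pairwise_ofFn.mpr fun i j hij => ?_
    have hpos : ∀ e, 0 < C e + γ e := fun e => by linarith [hC0 e, hγ e]
    have := (div_le_div_iff₀ (hpos (σ j)) (hpos (σ i))).mp (hsort i j hij.le)
    simp only [w, d, sub_sub_cancel, ← sub_add]
    linarith
  have hperm : (List.ofFn τ).Perm (List.ofFn σ) :=
    (τ.ofFn_comp_perm id).trans (σ.ofFn_comp_perm id).symm
  have key := cascadeValue.le_of_perm_of_pairwise w d hd hperm hsorted
  simpa only [cascadeValue.eq_sum_mul_prod_filter_lt] using key

/-- CE ranking optimality: arranging entities in descending order of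
`CE(e) = U(e)·C(e)/(C(e)+γ(e))` maximizes the expected utility
`∑ i, U(eᵢ)·C(eᵢ)·∏_{j<i} (1 - C(eⱼ) - γ(eⱼ))` over all permutations. -/
theorem ce_ranking_optimal (N : ℕ) (U C γ : Fin N → ℝ)
    (hU : ∀ e, 0 ≤ U e) (hC0 : ∀ e, 0 < C e) (hC1 : ∀ e, C e ≤ 1)
    (hγ : ∀ e, 0 ≤ γ e) (hsum : ∀ e, C e + γ e ≤ 1)
    (σ : Equiv.Perm (Fin N))
    (hsort : ∀ i j : Fin N, i ≤ j →
      U (σ j) * C (σ j) / (C (σ j) + γ (σ j)) ≤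
        U (σ i) * C (σ i) / (C (σ i) + γ (σ i))) :
    ∀ τ : Equiv.Perm (Fin N),
      ∑ i : Fin N, U (τ i) * C (τ i) *
          ∏ j ∈ Finset.univ.filter (fun j => j < i), (1 - C (τ j) - γ (τ j)) ≤
      ∑ i : Fin N, U (σ i) * C (σ i) *
          ∏ j ∈ Finset.univ.filter (fun j => j < i), (1 - C (σ j) - γ (σ j)) :=
  ce_ranking_optimal_general N U C γ hC0 hγ hsum σ hsort
end

section
/- For two adjacent entities e_i, e_{i+1} in a ranked list, placing e_i above e_{i+1} yields total expected utility at least as large as the inverted placement if and only if U(e_i)C(e_i)/(C(e_i)+γ(e_i)) ≥ U(e_{i+1})C(e_{i+1})/(C(e_{i+1})+γ(e_{i+1})). -/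
/-- Expected utility, relative to reaching the pair, of an entity with utility `a` and stopping
probability `μ` placed above one with utility `b`. -/
def pairUtility (a μ b : ℝ) : ℝ := a + (1 - μ) * b

-- The gain of putting `a` on top is `μ₂ * a - μ₁ * b`.
theorem pairUtility_le_pairUtility_iff {a b μ₁ μ₂ : ℝ} :
    pairUtility b μ₂ a ≤ pairUtility a μ₁ b ↔ b * μ₁ ≤ a * μ₂ := by
  unfold pairUtility
  constructor <;> intro h <;> linarith

theorem ce_adjacent_swap_general (U₁ C₁ γ₁ U₂ C₂ γ₂ K : ℝ) (hK : 0 < K)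
    (hμ₁ : 0 < C₁ + γ₁) (hμ₂ : 0 < C₂ + γ₂) :
    K * (U₂ * C₂ + (1 - (C₂ + γ₂)) * U₁ * C₁) ≤
      K * (U₁ * C₁ + (1 - (C₁ + γ₁)) * U₂ * C₂) ↔
    U₂ * C₂ / (C₂ + γ₂) ≤ U₁ * C₁ / (C₁ + γ₁) := by
  rw [mul_le_mul_iff_right₀ hK, div_le_div_iff₀ hμ₂ hμ₁, mul_assoc _ U₁, mul_assoc _ U₂]
  exact pairUtility_le_pairUtility_iff

/-- Adjacent swap lemma: placing entity 1 above entity 2 yields at least as much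
expected utility as the inverted placement iff `CE₁ ≥ CE₂`. Here `K > 0` is the
probability of reaching the pair's position. -/
theorem ce_adjacent_swap (U₁ C₁ γ₁ U₂ C₂ γ₂ K : ℝ) (hK : 0 < K)
    (hμ₁ : 0 < C₁ + γ₁) (hμ₁' : C₁ + γ₁ ≤ 1)
    (hμ₂ : 0 < C₂ + γ₂) (hμ₂' : C₂ + γ₂ ≤ 1) :
    K * (U₂ * C₂ + (1 - (C₂ + γ₂)) * U₁ * C₁) ≤
      K * (U₁ * C₁ + (1 - (C₁ + γ₁)) * U₂ * C₂) ↔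
    U₂ * C₂ / (C₂ + γ₂) ≤ U₁ * C₁ / (C₁ + γ₁) :=
  ce_adjacent_swap_general U₁ C₁ γ₁ U₂ C₂ γ₂ K hK hμ₁ hμ₂
end

section
/- Suppose advertisers are indexed in descending order of v_i c_i/μ_i (v_i ≥ 0 private values, c_i ∈ (0,1], μ_i = c_i + γ_i ∈ (0,1]), and bids are defined recursively by b_i = (μ_i/c_i)[v_i c_i + (1−μ_i)·b_{i+1}c_{i+1}/μ_{i+1}] with b_{N+1} = 0. Then for all i: b_i c_i/μ_i ≥ b_{i+1}c_{i+1}/μ_{i+1}, i.e., the bid-induced pricing order w_i b_i agrees with the assumed order. -/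
/-!
Write `μᵢ = cᵢ + γᵢ`, `sᵢ = vᵢcᵢ/μᵢ` and `xᵢ = bᵢcᵢ/μᵢ`. The bid recursion says exactly that
`xᵢ = μᵢ sᵢ + (1 - μᵢ) x_{i+1}` is a convex combination of `sᵢ` and `x_{i+1}`. Going down from
`x_N = 0 ≤ s_N`, this gives `x_{i+1} ≤ s_{i+1} ≤ sᵢ`, hence `x_{i+1} ≤ xᵢ ≤ sᵢ`.
-/

section BackwardConvexRecursion

variable {N : ℕ} {x s μ : ℕ → ℝ}

theorem le_of_backward_convex_recursion (hs0 : ∀ i, 0 ≤ s i) (hs : Antitone s)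
    (hμ1 : ∀ i, μ i ≤ 1) (hxN : ∀ i, N ≤ i → x i = 0)
    (hx : ∀ i, i < N → x i = μ i * s i + (1 - μ i) * x (i + 1)) (i : ℕ) : x i ≤ s i := by
  induction hk : N - i generalizing i with
  | zero => rw [hxN i (by omega)]; exact hs0 i
  | succ k ih =>
    have hnext : x (i + 1) ≤ s i := (ih (i + 1) (by omega)).trans (hs (Nat.le_succ i))
    have hμ1i : 0 ≤ 1 - μ i := sub_nonneg.2 (hμ1 i)
    calc x i = μ i * s i + (1 - μ i) * x (i + 1) := hx i (by omega)
      _ ≤ μ i * s i + (1 - μ i) * s i := by gcongr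
      _ = s i := by ring

theorem antitone_of_backward_convex_recursion (hs0 : ∀ i, 0 ≤ s i) (hs : Antitone s)
    (hμ0 : ∀ i, 0 ≤ μ i) (hμ1 : ∀ i, μ i ≤ 1) (hxN : ∀ i, N ≤ i → x i = 0)
    (hx : ∀ i, i < N → x i = μ i * s i + (1 - μ i) * x (i + 1)) : Antitone x := by
  refine antitone_nat_of_succ_le fun i => ?_
  rcases lt_or_ge i N with hi | hi
  · have hnext : x (i + 1) ≤ s i :=
      (le_of_backward_convex_recursion hs0 hs hμ1 hxN hx (i + 1)).trans (hs (Nat.le_succ i))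
    have hμ0i := hμ0 i
    calc x (i + 1) = μ i * x (i + 1) + (1 - μ i) * x (i + 1) := by ring
      _ ≤ μ i * s i + (1 - μ i) * x (i + 1) := by gcongr
      _ = x i := (hx i hi).symm
  · rw [hxN i hi, hxN (i + 1) (by omega)]

end BackwardConvexRecursion

theorem ce_equilibrium_bid_order_general (N : ℕ) (v c γ b : ℕ → ℝ)
    (hv : ∀ i, 0 ≤ v i)
    (hc : ∀ i, 0 < c i)
    (hγ : ∀ i, 0 ≤ γ i) (hμ : ∀ i, c i + γ i ≤ 1)
    (horder : ∀ i, v (i + 1) * c (i + 1) / (c (i + 1) + γ (i + 1)) ≤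
      v i * c i / (c i + γ i))
    (hbN : ∀ i, N ≤ i → b i = 0)
    (hb : ∀ i, i < N → b i = ((c i + γ i) / c i) *
      (v i * c i + (1 - (c i + γ i)) * b (i + 1) * c (i + 1) / (c (i + 1) + γ (i + 1)))) :
    ∀ i, b (i + 1) * c (i + 1) / (c (i + 1) + γ (i + 1)) ≤
      b i * c i / (c i + γ i) := by
  have hμpos : ∀ i, 0 < c i + γ i := fun i => add_pos_of_pos_of_nonneg (hc i) (hγ i)
  have hscore : Antitone fun i => b i * c i / (c i + γ i) := by
    refine antitone_of_backward_convex_recursion (N := N) (s := fun i => v i * c i / (c i + γ i))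
      (fun i => div_nonneg (mul_nonneg (hv i) (hc i).le) (hμpos i).le)
      (antitone_nat_of_succ_le horder) (fun i => (hμpos i).le) hμ
      (fun i hi => by simp only [hbN i hi, zero_mul, zero_div]) (fun i hi => ?_)
    rw [hb i hi]
    field_simp [(hc i).ne', (hμpos i).ne', (hμpos (i + 1)).ne']
  exact fun i => hscore (Nat.le_succ i)

/-- Step 1 of the Nash equilibrium proof: if advertisers `0,…,N-1` are indexed in
descending order of `vᵢcᵢ/μᵢ` (`μᵢ = cᵢ + γᵢ`) and bids are defined recursively by
`bᵢ = (μᵢ/cᵢ)[vᵢcᵢ + (1−μᵢ)b_{i+1}c_{i+1}/μ_{i+1}]` with bids vanishing from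
position `N` on, then `bᵢcᵢ/μᵢ` is non-increasing: the bid-induced pricing order
`wᵢbᵢ` agrees with the assumed order. -/
theorem ce_equilibrium_bid_order (N : ℕ) (v c γ b : ℕ → ℝ)
    (hv : ∀ i, 0 ≤ v i)
    (hc : ∀ i, 0 < c i) (hc1 : ∀ i, c i ≤ 1)
    (hγ : ∀ i, 0 ≤ γ i) (hμ : ∀ i, c i + γ i ≤ 1)
    (horder : ∀ i, v (i + 1) * c (i + 1) / (c (i + 1) + γ (i + 1)) ≤
      v i * c i / (c i + γ i))
    (hbN : ∀ i, N ≤ i → b i = 0)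
    (hb : ∀ i, i < N → b i = ((c i + γ i) / c i) *
      (v i * c i + (1 - (c i + γ i)) * b (i + 1) * c (i + 1) / (c (i + 1) + γ (i + 1)))) :
    ∀ i, b (i + 1) * c (i + 1) / (c (i + 1) + γ (i + 1)) ≤
      b i * c i / (c i + γ i) :=
  ce_equilibrium_bid_order_general N v c γ b hv hc hγ hμ horder hbN hb
end

section
/- With the equilibrium bids b_i = (μ_i/c_i)[v_i c_i + (1−μ_i)b_{i+1}c_{i+1}/μ_{i+1}] (b_{N+1}=0) and advertisers ordered by descending v_i c_i/μ_i, no advertiser i can strictly increase his expected profit (v_i − price paid)·(probability of click at his position) by unilaterally changing his bid to occupy any other position j, where upon moving to position j he pays the minimum bid needed to hold position j in the w·b order. That is, the stated bids form a pure-strategy Nash equilibrium of the CE mechanism. -/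
/-!
Write `μₖ = cₖ + γₖ`, `rₖ = vₖcₖ/μₖ` and `qₖ = bₖcₖ/μₖ` (the ranking score `wₖbₖ`). Paying the
score `Q` of the ad below him, advertiser `i` earns `μᵢ (rᵢ − Q) ∏ (1 − μₗ)`, the product over
the ads above him. The equilibrium bids are exactly the recursion `qₖ = μₖ rₖ + (1 − μₖ) q_{k+1}`,
i.e. `x − qₖ = μₖ (x − rₖ) + (1 − μₖ)(x − q_{k+1})`. Take `x = rᵢ` and use that `r` decreases:
each step down past `k > i` gives `(1 − μₖ)(rᵢ − q_{k+1}) ≤ rᵢ − qₖ`, so the cheaper price does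
not make up for the lost factor `1 − μₖ`; each step up past `k < i` gives
`rᵢ − qₖ ≤ (1 − μₖ)(rᵢ − q_{k+1})`, so the gained factor does not make up for the higher price.
-/

open Finset

theorem Finset.prod_range_erase_eq_prod_range_mul_prod_Ico {M : Type*} [CommMonoid M]
    (f : ℕ → M) {i n : ℕ} (hin : i < n) :
    ∏ l ∈ (range n).erase i, f l = (∏ l ∈ range i, f l) * ∏ l ∈ Ico (i + 1) n, f l := by
  rw [← prod_union (disjoint_left.2 fun l hl hl' => by simp at hl hl'; omega)]
  congr 1
  ext l
  simp only [mem_erase, mem_range, mem_union, mem_Ico]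
  omega

structure IsBackwardAverage (N : ℕ) (μ r q : ℕ → ℝ) : Prop where
  eq_zero : ∀ k, N ≤ k → q k = 0
  eq_average : ∀ k, k < N → q k = μ k * r k + (1 - μ k) * q (k + 1)

namespace IsBackwardAverage

variable {N : ℕ} {μ r q : ℕ → ℝ}

theorem sub_eq (h : IsBackwardAverage N μ r q) {k : ℕ} (hk : k < N) (x : ℝ) :
    x - q k = μ k * (x - r k) + (1 - μ k) * (x - q (k + 1)) := by
  rw [h.eq_average k hk]; ring

theorem le (h : IsBackwardAverage N μ r q) (hμ1 : ∀ k, μ k ≤ 1) (hr : Antitone r)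
    (hr0 : ∀ k, 0 ≤ r k) (k : ℕ) : q k ≤ r k := by
  rcases le_or_gt k N with hkN | hNk
  · induction hkN using Nat.decreasingInduction with
    | self => rw [h.eq_zero N le_rfl]; exact hr0 N
    | of_succ k hk ih =>
      have hsucc : q (k + 1) ≤ r k := ih.trans (hr k.le_succ)
      nlinarith [h.sub_eq hk (r k), hμ1 k]
  · rw [h.eq_zero k hNk.le]; exact hr0 k

theorem succ_le (h : IsBackwardAverage N μ r q) (hμ0 : ∀ k, 0 ≤ μ k) (hμ1 : ∀ k, μ k ≤ 1)
    (hr : Antitone r) (hr0 : ∀ k, 0 ≤ r k) (k : ℕ) : q (k + 1) ≤ q k := by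
  rcases lt_or_ge k N with hkN | hNk
  · have hsucc : q (k + 1) ≤ r k := (h.le hμ1 hr hr0 _).trans (hr k.le_succ)
    nlinarith [h.sub_eq hkN (q (k + 1)), hμ0 k]
  · rw [h.eq_zero k hNk, h.eq_zero (k + 1) (by omega)]

theorem one_sub_mul_sub_succ_le (h : IsBackwardAverage N μ r q) {k : ℕ} (hμk : 0 ≤ μ k)
    {x : ℝ} (hx : 0 ≤ x) (hrx : r k ≤ x) :
    (1 - μ k) * (x - q (k + 1)) ≤ x - q k := by
  rcases lt_or_ge k N with hkN | hNk
  · nlinarith [h.sub_eq hkN x, hμk]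
  · rw [h.eq_zero k hNk, h.eq_zero (k + 1) (by omega)]
    nlinarith [hμk]

theorem sub_le_one_sub_mul_sub_succ (h : IsBackwardAverage N μ r q) {k : ℕ} (hμk : 0 ≤ μ k)
    (hk : k < N) {x : ℝ} (hxr : x ≤ r k) :
    x - q k ≤ (1 - μ k) * (x - q (k + 1)) := by
  nlinarith [h.sub_eq hk x, hμk]

theorem sub_mul_prod_Ico_le (h : IsBackwardAverage N μ r q) (hμ0 : ∀ k, 0 ≤ μ k)
    (hμ1 : ∀ k, μ k ≤ 1) (hr : Antitone r) (hr0 : ∀ k, 0 ≤ r k) {i j : ℕ} (hij : i ≤ j) :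
    (r i - q (j + 1)) * ∏ l ∈ Ico (i + 1) (j + 1), (1 - μ l) ≤ r i - q (i + 1) := by
  induction j, hij using Nat.le_induction with
  | base => simp
  | succ j hij ih =>
    have hP : 0 ≤ ∏ l ∈ Ico (i + 1) (j + 1), (1 - μ l) :=
      prod_nonneg fun l _ => sub_nonneg.2 (hμ1 l)
    have hstep := h.one_sub_mul_sub_succ_le (hμ0 _) (hr0 i) (hr (show i ≤ j + 1 by omega))
    calc (r i - q (j + 1 + 1)) * ∏ l ∈ Ico (i + 1) (j + 1 + 1), (1 - μ l)
        = (1 - μ (j + 1)) * (r i - q (j + 1 + 1)) * ∏ l ∈ Ico (i + 1) (j + 1), (1 - μ l) := by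
          rw [prod_Ico_succ_top (by omega)]; ring
      _ ≤ (r i - q (j + 1)) * ∏ l ∈ Ico (i + 1) (j + 1), (1 - μ l) :=
          mul_le_mul_of_nonneg_right hstep hP
      _ ≤ r i - q (i + 1) := ih

theorem sub_mul_prod_range_le (h : IsBackwardAverage N μ r q) (hμ0 : ∀ k, 0 ≤ μ k)
    (hμ1 : ∀ k, μ k ≤ 1) (hr : Antitone r) {i j : ℕ} (hji : j ≤ i) (hiN : i ≤ N) :
    (r i - q j) * ∏ l ∈ range j, (1 - μ l) ≤ (r i - q i) * ∏ l ∈ range i, (1 - μ l) := by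
  induction hji using Nat.decreasingInduction with
  | self => rfl
  | of_succ j hji ih =>
    have hP : 0 ≤ ∏ l ∈ range j, (1 - μ l) := prod_nonneg fun l _ => sub_nonneg.2 (hμ1 l)
    have hstep := h.sub_le_one_sub_mul_sub_succ (hμ0 j) (show j < N by omega) (hr hji.le)
    calc (r i - q j) * ∏ l ∈ range j, (1 - μ l)
        ≤ (1 - μ j) * (r i - q (j + 1)) * ∏ l ∈ range j, (1 - μ l) :=
          mul_le_mul_of_nonneg_right hstep hP
      _ = (r i - q (j + 1)) * ∏ l ∈ range (j + 1), (1 - μ l) := by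
          rw [prod_range_succ]; ring
      _ ≤ _ := ih

theorem sub_mul_prod_erase_le (h : IsBackwardAverage N μ r q) (hμ0 : ∀ k, 0 ≤ μ k)
    (hμ1 : ∀ k, μ k ≤ 1) (hr : Antitone r) (hr0 : ∀ k, 0 ≤ r k) {i j : ℕ} (hij : i ≤ j) :
    (r i - q (j + 1)) * ∏ l ∈ (range (j + 1)).erase i, (1 - μ l) ≤
      (r i - q (i + 1)) * ∏ l ∈ range i, (1 - μ l) := by
  have hP : 0 ≤ ∏ l ∈ range i, (1 - μ l) := prod_nonneg fun l _ => sub_nonneg.2 (hμ1 l)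
  calc (r i - q (j + 1)) * ∏ l ∈ (range (j + 1)).erase i, (1 - μ l)
      = ((r i - q (j + 1)) * ∏ l ∈ Ico (i + 1) (j + 1), (1 - μ l)) * ∏ l ∈ range i, (1 - μ l) := by
        rw [prod_range_erase_eq_prod_range_mul_prod_Ico _ (by omega)]; ring
    _ ≤ (r i - q (i + 1)) * ∏ l ∈ range i, (1 - μ l) :=
        mul_le_mul_of_nonneg_right (h.sub_mul_prod_Ico_le hμ0 hμ1 hr hr0 hij) hP

theorem sub_mul_prod_range_le_of_lt (h : IsBackwardAverage N μ r q) (hμ0 : ∀ k, 0 ≤ μ k)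
    (hμ1 : ∀ k, μ k ≤ 1) (hr : Antitone r) (hr0 : ∀ k, 0 ≤ r k) {i j : ℕ} (hji : j < i)
    (hiN : i ≤ N) :
    (r i - q j) * ∏ l ∈ range j, (1 - μ l) ≤ (r i - q (i + 1)) * ∏ l ∈ range i, (1 - μ l) := by
  have hP : 0 ≤ ∏ l ∈ range i, (1 - μ l) := prod_nonneg fun l _ => sub_nonneg.2 (hμ1 l)
  refine (h.sub_mul_prod_range_le hμ0 hμ1 hr hji.le hiN).trans ?_
  exact mul_le_mul_of_nonneg_right (sub_le_sub_left (h.succ_le hμ0 hμ1 hr hr0 i) _) hP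

end IsBackwardAverage

theorem ce_nash_equilibrium_general (N : ℕ) (v c γ b : ℕ → ℝ)
    (hv : ∀ i, 0 ≤ v i)
    (hc : ∀ i, 0 < c i)
    (hγ : ∀ i, 0 ≤ γ i) (hμ : ∀ i, c i + γ i ≤ 1)
    (horder : ∀ i, v (i + 1) * c (i + 1) / (c (i + 1) + γ (i + 1)) ≤
      v i * c i / (c i + γ i))
    (hbN : ∀ i, N ≤ i → b i = 0)
    (hb : ∀ i, i < N → b i = ((c i + γ i) / c i) *
      (v i * c i + (1 - (c i + γ i)) * b (i + 1) * c (i + 1) / (c (i + 1) + γ (i + 1)))) :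
    ∀ i j, i < N → j < N →
      (if i ≤ j then
        (v i - b (j + 1) * c (j + 1) * (c i + γ i) / ((c (j + 1) + γ (j + 1)) * c i))
          * c i * ∏ l ∈ (Finset.range (j + 1)).erase i, (1 - c l - γ l)
      else
        (v i - b j * c j * (c i + γ i) / ((c j + γ j) * c i))
          * c i * ∏ l ∈ Finset.range j, (1 - c l - γ l)) ≤
      (v i - b (i + 1) * c (i + 1) * (c i + γ i) / ((c (i + 1) + γ (i + 1)) * c i))
        * c i * ∏ l ∈ Finset.range i, (1 - c l - γ l) := by
  intro i j hiN _
  have hμpos : ∀ k, 0 < c k + γ k := fun k => add_pos_of_pos_of_nonneg (hc k) (hγ k)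
  have hμ0 : ∀ k, 0 ≤ c k + γ k := fun k => (hμpos k).le
  have hr : Antitone fun k => v k * c k / (c k + γ k) := antitone_nat_of_succ_le horder
  have hr0 : ∀ k, 0 ≤ v k * c k / (c k + γ k) :=
    fun k => div_nonneg (mul_nonneg (hv k) (hc k).le) (hμ0 k)
  have hq : IsBackwardAverage N (fun k => c k + γ k) (fun k => v k * c k / (c k + γ k))
      (fun k => b k * c k / (c k + γ k)) := by
    refine ⟨fun k hk => by simp [hbN k hk], fun k hk => ?_⟩
    rw [hb k hk]
    field_simp [(hc k).ne', (hμpos k).ne', (hμpos (k + 1)).ne']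
  have hprofit : ∀ m (P : ℝ), (v i - b m * c m * (c i + γ i) / ((c m + γ m) * c i)) * c i * P
      = (c i + γ i) * ((v i * c i / (c i + γ i) - b m * c m / (c m + γ m)) * P) := by
    intro m P
    field_simp [(hc i).ne', (hμpos i).ne', (hμpos m).ne']
  simp only [hprofit, sub_sub]
  split_ifs with hij
  · exact mul_le_mul_of_nonneg_left (hq.sub_mul_prod_erase_le hμ0 hμ hr hr0 hij) (hμ0 i)
  · exact mul_le_mul_of_nonneg_left
      (hq.sub_mul_prod_range_le_of_lt hμ0 hμ hr hr0 (not_le.1 hij) hiN.le) (hμ0 i)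

/-- Nash equilibrium of the CE mechanism (Theorem 3): with advertisers `0,…,N-1`
ordered in descending `vᵢcᵢ/μᵢ` and bids
`bᵢ = (μᵢ/cᵢ)[vᵢcᵢ + (1−μᵢ)b_{i+1}c_{i+1}/μ_{i+1}]` (bids vanish from `N` on),
no advertiser `i` can strictly increase his expected profit by unilaterally
changing his bid to occupy another position `j`.  Moving to position `j ≥ i` he
pays `b_{j+1}c_{j+1}μᵢ/(μ_{j+1}cᵢ)` and the ads above him are `{0,…,j} \ {i}`;
moving to `j < i` he pays `b_j c_j μᵢ/(μ_j cᵢ)` and the ads above him are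
`{0,…,j-1}`.  His profit in place is `(vᵢ − pᵢ)·cᵢ·∏_{l<i}(1−μ_l)`. -/
theorem ce_nash_equilibrium (N : ℕ) (v c γ b : ℕ → ℝ)
    (hv : ∀ i, 0 ≤ v i)
    (hc : ∀ i, 0 < c i) (hc1 : ∀ i, c i ≤ 1)
    (hγ : ∀ i, 0 ≤ γ i) (hμ : ∀ i, c i + γ i ≤ 1)
    (horder : ∀ i, v (i + 1) * c (i + 1) / (c (i + 1) + γ (i + 1)) ≤
      v i * c i / (c i + γ i))
    (hbN : ∀ i, N ≤ i → b i = 0)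
    (hb : ∀ i, i < N → b i = ((c i + γ i) / c i) *
      (v i * c i + (1 - (c i + γ i)) * b (i + 1) * c (i + 1) / (c (i + 1) + γ (i + 1)))) :
    ∀ i j, i < N → j < N →
      (if i ≤ j then
        (v i - b (j + 1) * c (j + 1) * (c i + γ i) / ((c (j + 1) + γ (j + 1)) * c i))
          * c i * ∏ l ∈ (Finset.range (j + 1)).erase i, (1 - c l - γ l)
      else
        (v i - b j * c j * (c i + γ i) / ((c j + γ j) * c i))
          * c i * ∏ l ∈ Finset.range j, (1 - c l - γ l)) ≤
      (v i - b (i + 1) * c (i + 1) * (c i + γ i) / ((c (i + 1) + γ (i + 1)) * c i))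
        * c i * ∏ l ∈ Finset.range i, (1 - c l - γ l) :=
  ce_nash_equilibrium_general N v c γ b hv hc hγ hμ horder hbN hb
end

section
/- In the CE auction equilibrium bids b_i = (μ_i/c_i)[v_i c_i + (1−μ_i)b_{i+1}c_{i+1}/μ_{i+1}], the induced ranking (descending w_i b_i) coincides with the socially optimal order, i.e., descending v_i c_i/μ_i; hence the equilibrium allocation maximizes total advertiser revenue Σ_i v_i c_i Π_{j<i}(1−μ_j) over all orderings. -/
/-!
Write `μᵢ = cᵢ + γᵢ`, `rᵢ = vᵢcᵢ/μᵢ` and `Bᵢ = wᵢbᵢ = bᵢcᵢ/μᵢ`. The equilibrium recursion becomes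
`Bᵢ = μᵢrᵢ + (1 - μᵢ)Bᵢ₊₁`, so `Bᵢ` lies between `Bᵢ₊₁` and `rᵢ`. Downward induction from
`B_N = 0 ≤ r_N` gives `Bᵢ ≤ rᵢ`, hence `Bᵢ₊₁ ≤ rᵢ₊₁ ≤ rᵢ` and therefore `Bᵢ₊₁ ≤ Bᵢ`.

For optimality, putting an advertiser `p` directly before `q` rather than directly after it gains
`p.1 q.2 - q.1 p.2` in revenue, so bubbling the first advertiser of an arbitrary order back to its
place in the descending-ratio order never decreases revenue; induction on the length of the order
finishes the exchange argument.
-/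

open Finset

/-- Each pair is `(vᵢcᵢ, μᵢ)`; slot `i` is reached with probability `∏_{j<i} (1 - μⱼ)`. -/
noncomputable def cascadeRevenue : List (ℝ × ℝ) → ℝ
  | [] => 0
  | p :: l => p.1 + (1 - p.2) * cascadeRevenue l

/-- `q.1 / q.2 ≤ p.1 / p.2`, cross-multiplied so that no positivity is needed. -/
def RatioGE (p q : ℝ × ℝ) : Prop := q.1 * p.2 ≤ p.1 * q.2

namespace cascadeRevenue

theorem swap_le {p q : ℝ × ℝ} (h : RatioGE p q) (l : List (ℝ × ℝ)) :
    cascadeRevenue (q :: p :: l) ≤ cascadeRevenue (p :: q :: l) := by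
  simp only [cascadeRevenue]
  unfold RatioGE at h
  linarith

theorem cons_le_cons (p : ℝ × ℝ) (hp : p.2 ≤ 1) {l₁ l₂ : List (ℝ × ℝ)}
    (h : cascadeRevenue l₁ ≤ cascadeRevenue l₂) :
    cascadeRevenue (p :: l₁) ≤ cascadeRevenue (p :: l₂) :=
  add_le_add_right (mul_le_mul_of_nonneg_left h (sub_nonneg.2 hp)) _

variable {l : List (ℝ × ℝ)}

theorem cons_erase_le (h1 : ∀ q ∈ l, q.2 ≤ 1) (hl : l.Pairwise RatioGE) {x : ℝ × ℝ}
    (hx : x ∈ l) : cascadeRevenue (x :: l.erase x) ≤ cascadeRevenue l := by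
  induction l with
  | nil => simp at hx
  | cons y t ih =>
    obtain rfl | hxy := eq_or_ne y x
    · rw [List.erase_cons_head]
    have hxt : x ∈ t := (List.mem_cons.mp hx).resolve_left hxy.symm
    rw [List.erase_cons_tail (by simpa using hxy)]
    obtain ⟨hyt, ht⟩ := List.pairwise_cons.mp hl
    calc cascadeRevenue (x :: y :: t.erase x)
        ≤ cascadeRevenue (y :: x :: t.erase x) := swap_le (hyt x hxt) _
      _ ≤ cascadeRevenue (y :: t) :=
        cons_le_cons y (h1 y (by simp)) (ih (fun q hq => h1 q (by simp [hq])) ht hxt)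

theorem le_of_perm (h1 : ∀ q ∈ l, q.2 ≤ 1) (hl : l.Pairwise RatioGE) {l' : List (ℝ × ℝ)}
    (hperm : l'.Perm l) : cascadeRevenue l' ≤ cascadeRevenue l := by
  induction l' generalizing l with
  | nil => rw [← hperm.nil_eq]
  | cons x t ih =>
    have hx : x ∈ l := hperm.mem_iff.mp (by simp)
    have hsub := List.erase_sublist (a := x) (l := l)
    have ht : t.Perm (l.erase x) := (List.perm_cons x).mp (hperm.trans (List.perm_cons_erase hx))
    calc cascadeRevenue (x :: t)
        ≤ cascadeRevenue (x :: l.erase x) :=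
          cons_le_cons x (h1 x hx) (ih (fun q hq => h1 q (hsub.mem hq)) (hl.sublist hsub) ht)
      _ ≤ cascadeRevenue l := cons_erase_le h1 hl hx

end cascadeRevenue

theorem sum_mul_prod_filter_lt_eq_cascadeRevenue {n : ℕ} (a μ : Fin n → ℝ) :
    ∑ i, a i * ∏ j ∈ univ.filter (· < i), (1 - μ j) =
      cascadeRevenue (List.ofFn fun i => (a i, μ i)) := by
  induction n with
  | zero => simp [cascadeRevenue]
  | succ n ih =>
    have hprod (i : Fin n) : ∏ j ∈ univ.filter (· < i.succ), (1 - μ j) =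
        (1 - μ 0) * ∏ j ∈ univ.filter (· < i), (1 - μ j.succ) := by
      simp [prod_filter, Fin.prod_univ_succ, Fin.succ_lt_succ_iff]
    rw [List.ofFn_succ, cascadeRevenue, Fin.sum_univ_succ, ← ih, mul_sum]
    simp only [hprod, Fin.not_lt_zero, filter_false, prod_empty, mul_one]
    exact congrArg _ (sum_congr rfl fun i _ => by ring)

theorem combo_mem_Icc {μ x y : ℝ} (h0 : 0 ≤ μ) (h1 : μ ≤ 1) (hyx : y ≤ x) :
    μ * x + (1 - μ) * y ∈ Set.Icc y x := by
  constructor <;> nlinarith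

theorem antitone_of_eq_combo_succ {N : ℕ} {μ r B : ℕ → ℝ} (hμ0 : ∀ i, 0 ≤ μ i)
    (hμ1 : ∀ i, μ i ≤ 1) (hr : Antitone r) (hrN : 0 ≤ r N) (hBN : ∀ i, N ≤ i → B i = 0)
    (hB : ∀ i < N, B i = μ i * r i + (1 - μ i) * B (i + 1)) : Antitone B := by
  have hBr {i} (hi : i ≤ N) : B i ≤ r i := by
    induction hi using Nat.decreasingInduction with
    | self => rw [hBN N le_rfl]; exact hrN
    | of_succ k hk ih =>
      rw [hB k hk]
      exact (combo_mem_Icc (hμ0 k) (hμ1 k) (ih.trans (hr k.le_succ))).2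
  refine antitone_nat_of_succ_le fun i => ?_
  rcases lt_or_ge i N with hi | hi
  · rw [hB i hi]
    exact (combo_mem_Icc (hμ0 i) (hμ1 i) ((hBr hi).trans (hr i.le_succ))).1
  · rw [hBN i hi, hBN (i + 1) (by omega)]

theorem ce_equilibrium_socially_optimal_general (N : ℕ) (v c γ b : ℕ → ℝ)
    (hv : ∀ i, 0 ≤ v i)
    (hc : ∀ i, 0 < c i)
    (hγ : ∀ i, 0 ≤ γ i) (hμ : ∀ i, c i + γ i ≤ 1)
    (horder : ∀ i, v (i + 1) * c (i + 1) / (c (i + 1) + γ (i + 1)) ≤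
      v i * c i / (c i + γ i))
    (hbN : ∀ i, N ≤ i → b i = 0)
    (hb : ∀ i, i < N → b i = ((c i + γ i) / c i) *
      (v i * c i + (1 - (c i + γ i)) * b (i + 1) * c (i + 1) / (c (i + 1) + γ (i + 1)))) :
    (∀ i, b (i + 1) * c (i + 1) / (c (i + 1) + γ (i + 1)) ≤
      b i * c i / (c i + γ i)) ∧
    (∀ σ : Equiv.Perm (Fin N),
      ∑ i : Fin N, v (σ i) * c (σ i) *
          ∏ j ∈ Finset.univ.filter (fun j => j < i), (1 - c (σ j) - γ (σ j)) ≤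
      ∑ i : Fin N, v i * c i *
          ∏ j ∈ Finset.univ.filter (fun j => j < i), (1 - c (j : ℕ) - γ (j : ℕ))) := by
  have hμ0 i : 0 < c i + γ i := add_pos_of_pos_of_nonneg (hc i) (hγ i)
  have hr : Antitone fun i => v i * c i / (c i + γ i) := antitone_nat_of_succ_le horder
  constructor
  · have hrec : ∀ i < N, b i * c i / (c i + γ i) = (c i + γ i) * (v i * c i / (c i + γ i)) +
        (1 - (c i + γ i)) * (b (i + 1) * c (i + 1) / (c (i + 1) + γ (i + 1))) := fun i hi => by
      have := (hc i).ne'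
      have := (hμ0 i).ne'
      rw [hb i hi]
      field_simp
    exact fun i => antitone_of_eq_combo_succ (fun i => (hμ0 i).le) hμ hr
      (div_nonneg (mul_nonneg (hv N) (hc N).le) (hμ0 N).le)
      (fun i hi => by simp only [hbN i hi, zero_mul, zero_div]) hrec i.le_succ
  · intro σ
    let g : Fin N → ℝ × ℝ := fun i => (v i * c i, c i + γ i)
    have hsorted : (List.ofFn g).Pairwise RatioGE := List.pairwise_ofFn.mpr fun i j hij =>
      (div_le_div_iff₀ (hμ0 _) (hμ0 _)).mp (hr hij.le)
    simp only [sub_sub, sum_mul_prod_filter_lt_eq_cascadeRevenue]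
    exact cascadeRevenue.le_of_perm (by simpa [g] using fun i : Fin N => hμ i) hsorted
      (Equiv.Perm.ofFn_comp_perm σ g)

/-- At the CE equilibrium bids, the induced ranking (descending `wᵢbᵢ = bᵢcᵢ/μᵢ`)
coincides with the socially optimal order (descending `vᵢcᵢ/μᵢ`, here the index
order), and hence the equilibrium allocation maximizes total advertiser revenue
`∑ᵢ vᵢcᵢ∏_{j<i}(1−μⱼ)` over all orderings. -/
theorem ce_equilibrium_socially_optimal (N : ℕ) (v c γ b : ℕ → ℝ)
    (hv : ∀ i, 0 ≤ v i)
    (hc : ∀ i, 0 < c i) (hc1 : ∀ i, c i ≤ 1)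
    (hγ : ∀ i, 0 ≤ γ i) (hμ : ∀ i, c i + γ i ≤ 1)
    (horder : ∀ i, v (i + 1) * c (i + 1) / (c (i + 1) + γ (i + 1)) ≤
      v i * c i / (c i + γ i))
    (hbN : ∀ i, N ≤ i → b i = 0)
    (hb : ∀ i, i < N → b i = ((c i + γ i) / c i) *
      (v i * c i + (1 - (c i + γ i)) * b (i + 1) * c (i + 1) / (c (i + 1) + γ (i + 1)))) :
    (∀ i, b (i + 1) * c (i + 1) / (c (i + 1) + γ (i + 1)) ≤
      b i * c i / (c i + γ i)) ∧
    (∀ σ : Equiv.Perm (Fin N),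
      ∑ i : Fin N, v (σ i) * c (σ i) *
          ∏ j ∈ Finset.univ.filter (fun j => j < i), (1 - c (σ j) - γ (σ j)) ≤
      ∑ i : Fin N, v i * c i *
          ∏ j ∈ Finset.univ.filter (fun j => j < i), (1 - c (j : ℕ) - γ (j : ℕ))) :=
  ce_equilibrium_socially_optimal_general N v c γ b hv hc hγ hμ horder hbN hb
end

section
/- For the same bid vector and the same ranking, the CE mechanism payment dominates the VCG payment at every position: p_i^{CE} = b_{i+1}c_{i+1}μ_i/(μ_{i+1}c_i) ≥ p_i^V = (μ_i/c_i)Σ_{j=i+1}^{N} b_j c_j Π_{k=i+1}^{j-1}(1−μ_k), provided the bids are sorted so that b_i c_i/μ_i is non-increasing in i. Consequently the search engine's total expected revenue under CE pricing is at least that under VCG pricing. -/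
/-! Write `μᵢ = cᵢ + γᵢ` and `aᵢ = bᵢcᵢ/μᵢ`, so that `pᵢᵛ = (μᵢ/cᵢ) Sᵢ₊₁` with
`Sₘ = ∑_{j ≥ m} μⱼaⱼ ∏_{m ≤ k < j}(1 - μₖ)` and `pᵢᶜᴱ = (μᵢ/cᵢ) aᵢ₊₁`.
Peeling off the first term gives `Sₘ = μₘaₘ + (1 - μₘ)Sₘ₊₁`, a convex combination of
`aₘ` and `Sₘ₊₁`; since `a` is non-increasing, induction gives `Sₘ ≤ aₘ`. -/

namespace CEvsVCG

open Finset

def discountedSum (N : ℕ) (μ x : ℕ → ℝ) (m : ℕ) : ℝ :=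
  ∑ j ∈ Ico m N, x j * ∏ k ∈ Ico m j, (1 - μ k)

variable {N : ℕ} {μ x : ℕ → ℝ} {m : ℕ}

theorem discountedSum_of_le (h : N ≤ m) : discountedSum N μ x m = 0 := by
  rw [discountedSum, Ico_eq_empty_of_le h, sum_empty]

theorem discountedSum_eq_add (h : m < N) :
    discountedSum N μ x m = x m + (1 - μ m) * discountedSum N μ x (m + 1) := by
  rw [discountedSum, sum_eq_sum_Ico_succ_bot h, Ico_self, prod_empty, mul_one,
    discountedSum, mul_sum]
  congr 1
  refine sum_congr rfl fun j hj => ?_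
  rw [prod_eq_prod_Ico_succ_bot (by grind)]
  ring

theorem discountedSum_le {a : ℕ → ℝ} (ha : Antitone a) (ha0 : ∀ j, 0 ≤ a j)
    (hμ : ∀ j, μ j ≤ 1) (m : ℕ) :
    discountedSum N μ (fun j => μ j * a j) m ≤ a m := by
  induction h : N - m generalizing m with
  | zero => rw [discountedSum_of_le (by omega)]; exact ha0 m
  | succ d ih =>
    have hS : discountedSum N μ (fun j => μ j * a j) (m + 1) ≤ a m :=
      (ih (m + 1) (by omega)).trans (ha m.le_succ)
    have h1μ : 0 ≤ 1 - μ m := sub_nonneg.mpr (hμ m)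
    calc discountedSum N μ (fun j => μ j * a j) m
        = μ m * a m + (1 - μ m) * discountedSum N μ (fun j => μ j * a j) (m + 1) :=
          discountedSum_eq_add (by omega)
      _ ≤ μ m * a m + (1 - μ m) * a m := by gcongr
      _ = a m := by ring

end CEvsVCG

open CEvsVCG in
theorem ce_revenue_dominates_vcg_general (N : ℕ) (b c γ : ℕ → ℝ) (pV pCE : ℕ → ℝ)
    (hc : ∀ i, 0 < c i)
    (hγ : ∀ i, 0 ≤ γ i) (hμ : ∀ i, c i + γ i ≤ 1)
    (hb0 : ∀ i, 0 ≤ b i)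
    (hsort : ∀ i, b (i + 1) * c (i + 1) / (c (i + 1) + γ (i + 1)) ≤
      b i * c i / (c i + γ i))
    (hpV : ∀ i, pV i = ((c i + γ i) / c i) *
      ∑ j ∈ Finset.Ico (i + 1) N, b j * c j *
        ∏ k ∈ Finset.Ico (i + 1) j, (1 - c k - γ k))
    (hpCE : ∀ i, pCE i = b (i + 1) * c (i + 1) * (c i + γ i) /
      ((c (i + 1) + γ (i + 1)) * c i)) :
    (∀ i, i < N → pV i ≤ pCE i) ∧
    (∑ i ∈ Finset.range N, pV i * c i * ∏ j ∈ Finset.range i, (1 - c j - γ j) ≤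
     ∑ i ∈ Finset.range N, pCE i * c i * ∏ j ∈ Finset.range i, (1 - c j - γ j)) := by
  set μ : ℕ → ℝ := fun i => c i + γ i
  set a : ℕ → ℝ := fun i => b i * c i / μ i
  have hμ0 (i : ℕ) : 0 < μ i := add_pos_of_pos_of_nonneg (hc i) (hγ i)
  have hpV' (i : ℕ) : pV i = μ i / c i * discountedSum N μ (fun j => μ j * a j) (i + 1) := by
    simp only [hpV, discountedSum, a, mul_div_cancel₀ _ (hμ0 _).ne', μ, sub_sub]
  have hpCE' (i : ℕ) : pCE i = μ i / c i * a (i + 1) := by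
    rw [hpCE, div_mul_div_comm, mul_comm (μ i), mul_comm (c i)]
  have hpay (i : ℕ) : pV i ≤ pCE i := by
    rw [hpV', hpCE']
    gcongr
    · exact div_nonneg (hμ0 i).le (hc i).le
    · exact discountedSum_le (antitone_nat_of_succ_le hsort)
        (fun j => div_nonneg (mul_nonneg (hb0 j) (hc j).le) (hμ0 j).le) hμ _
  refine ⟨fun i _ => hpay i, Finset.sum_le_sum fun i _ => ?_⟩
  have hreach : 0 ≤ ∏ j ∈ Finset.range i, (1 - c j - γ j) :=
    Finset.prod_nonneg fun j _ => by linarith [hμ j]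
  gcongr
  · exact (hc i).le
  · exact hpay i

/-- Search engine revenue dominance of CE over VCG (Theorem 4): for the same bid
vector (sorted so that `bᵢcᵢ/μᵢ` is non-increasing, bids nonnegative and
vanishing from position `N` on) and the same ranking, the CE payment
`pᵢᶜᴱ = b_{i+1}c_{i+1}μᵢ/(μ_{i+1}cᵢ)` dominates the VCG payment
`pᵢᵛ = (μᵢ/cᵢ)∑_{j=i+1}^{N-1} bⱼcⱼ∏_{k=i+1}^{j-1}(1−μₖ)` at every position, and
consequently the total expected search engine revenue under CE pricing is at
least that under VCG pricing. -/
theorem ce_revenue_dominates_vcg (N : ℕ) (b c γ : ℕ → ℝ) (pV pCE : ℕ → ℝ)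
    (hc : ∀ i, 0 < c i) (hc1 : ∀ i, c i ≤ 1)
    (hγ : ∀ i, 0 ≤ γ i) (hμ : ∀ i, c i + γ i ≤ 1)
    (hb0 : ∀ i, 0 ≤ b i) (hbN : ∀ i, N ≤ i → b i = 0)
    (hsort : ∀ i, b (i + 1) * c (i + 1) / (c (i + 1) + γ (i + 1)) ≤
      b i * c i / (c i + γ i))
    (hpV : ∀ i, pV i = ((c i + γ i) / c i) *
      ∑ j ∈ Finset.Ico (i + 1) N, b j * c j *
        ∏ k ∈ Finset.Ico (i + 1) j, (1 - c k - γ k))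
    (hpCE : ∀ i, pCE i = b (i + 1) * c (i + 1) * (c i + γ i) /
      ((c (i + 1) + γ (i + 1)) * c i)) :
    (∀ i, i < N → pV i ≤ pCE i) ∧
    (∑ i ∈ Finset.range N, pV i * c i * ∏ j ∈ Finset.range i, (1 - c j - γ j) ≤
     ∑ i ∈ Finset.range N, pCE i * c i * ∏ j ∈ Finset.range i, (1 - c j - γ j)) :=
  ce_revenue_dominates_vcg_general N b c γ pV pCE hc hγ hμ hb0 hsort hpV hpCE
end

section
/- When advertisers bid their true values b_i = v_i (sorted in descending v_i c_i/μ_i order), the VCG per-click payment satisfies the recursion p_i^V = (μ_i/c_i)[v_{i+1}c_{i+1} + (1−μ_{i+1})c_{i+1} p_{i+1}^V/μ_{i+1}], and the CE equilibrium payment with bids b_i = (μ_i/c_i)[v_i c_i + (1−μ_i)b_{i+1}c_{i+1}/μ_{i+1}] satisfies the identical recursion p_i^{CE} = (μ_i/c_i)[v_{i+1}c_{i+1} + (1−μ_{i+1})c_{i+1} p_{i+1}^{CE}/μ_{i+1}]; since p_N^V = p_N^{CE} = 0, the payments are equal at every position. Hence the search engine revenue at the CE equilibrium equals the revenue at the truthful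 dominant-strategy VCG equilibrium. -/
/-!
Both per-click payments satisfy the same backward recursion `pᵢ = Fᵢ(pᵢ₊₁)` on positions
`i + 1 < N`: for VCG it comes from peeling the first term off the tail sum, for CE from
substituting the equilibrium bid `bᵢ₊₁`. Both vanish at the last position, so by downward
induction they agree everywhere, and so do the revenues, which are weighted sums of payments.
-/

open Finset

theorem eq_of_backward_recursion {α : Type*} {N : ℕ} (f : ℕ → α → α) {p q : ℕ → α}
    (hp : ∀ i, i + 1 < N → p i = f i (p (i + 1)))
    (hq : ∀ i, i + 1 < N → q i = f i (q (i + 1)))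
    (hlast : p (N - 1) = q (N - 1)) :
    ∀ i < N, p i = q i := by
  intro i hi
  induction h : N - 1 - i generalizing i with
  | zero =>
    obtain rfl : i = N - 1 := by omega
    exact hlast
  | succ d ih => rw [hp i (by omega), hq i (by omega), ih (i + 1) (by omega) (by omega)]

theorem sum_Ico_mul_prod_Ico_eq_add_mul {R : Type*} [CommSemiring R] (w r : ℕ → R)
    {m N : ℕ} (h : m < N) :
    ∑ j ∈ Ico m N, w j * ∏ k ∈ Ico m j, r k =
      w m + r m * ∑ j ∈ Ico (m + 1) N, w j * ∏ k ∈ Ico (m + 1) j, r k := by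
  rw [sum_eq_sum_Ico_succ_bot h, Ico_self, prod_empty, mul_one, mul_sum]
  congr 1
  refine sum_congr rfl fun j hj => ?_
  rw [prod_eq_prod_Ico_succ_bot (mem_Ico.mp hj).1]
  ring

section Payments

variable (N : ℕ) (v b c γ : ℕ → ℝ)

/-- The map `pᵢ₊₁ ↦ pᵢ` of the common payment recursion, with `μᵢ = cᵢ + γᵢ`. -/
noncomputable def paymentStep (i : ℕ) (p : ℝ) : ℝ :=
  ((c i + γ i) / c i) *
    (v (i + 1) * c (i + 1) +
      (1 - (c (i + 1) + γ (i + 1))) * c (i + 1) * p / (c (i + 1) + γ (i + 1)))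

noncomputable def vcgPayment (i : ℕ) : ℝ :=
  ((c i + γ i) / c i) * ∑ j ∈ Ico (i + 1) N, v j * c j * ∏ k ∈ Ico (i + 1) j, (1 - c k - γ k)

noncomputable def cePayment (i : ℕ) : ℝ :=
  b (i + 1) * c (i + 1) * (c i + γ i) / ((c (i + 1) + γ (i + 1)) * c i)

variable {N v b c γ}

theorem vcgPayment_eq_paymentStep {i : ℕ} (hc : c (i + 1) ≠ 0) (hμ : c (i + 1) + γ (i + 1) ≠ 0)
    (hi : i + 1 < N) :
    vcgPayment N v c γ i = paymentStep v c γ i (vcgPayment N v c γ (i + 1)) := by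
  rw [vcgPayment, vcgPayment, paymentStep,
    sum_Ico_mul_prod_Ico_eq_add_mul (fun j => v j * c j) (fun k => 1 - c k - γ k) hi]
  field_simp
  ring

theorem vcgPayment_eq_zero {i : ℕ} (h : N ≤ i + 1) : vcgPayment N v c γ i = 0 := by
  rw [vcgPayment, Ico_eq_empty_of_le h, sum_empty, mul_zero]

theorem cePayment_eq_paymentStep {i : ℕ} (hc : c (i + 1) ≠ 0) (hμ : c (i + 1) + γ (i + 1) ≠ 0)
    (hb : b (i + 1) = ((c (i + 1) + γ (i + 1)) / c (i + 1)) *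
      (v (i + 1) * c (i + 1) +
        (1 - (c (i + 1) + γ (i + 1))) * b (i + 2) * c (i + 2) / (c (i + 2) + γ (i + 2)))) :
    cePayment b c γ i = paymentStep v c γ i (cePayment b c γ (i + 1)) := by
  rw [cePayment, cePayment, paymentStep, hb]
  field_simp

theorem cePayment_eq_zero {i : ℕ} (hb : b (i + 1) = 0) : cePayment b c γ i = 0 := by
  rw [cePayment, hb, zero_mul, zero_mul, zero_div]

end Payments

theorem ce_equilibrium_revenue_equals_vcg_general (N : ℕ) (v c γ b : ℕ → ℝ)
    (pV pCE : ℕ → ℝ)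
    (hc : ∀ i, 0 < c i)
    (hγ : ∀ i, 0 ≤ γ i)
    (hbN : ∀ i, N ≤ i → b i = 0)
    (hb : ∀ i, i < N → b i = ((c i + γ i) / c i) *
      (v i * c i + (1 - (c i + γ i)) * b (i + 1) * c (i + 1) / (c (i + 1) + γ (i + 1))))
    (hpV : ∀ i, pV i = ((c i + γ i) / c i) *
      ∑ j ∈ Finset.Ico (i + 1) N, v j * c j *
        ∏ k ∈ Finset.Ico (i + 1) j, (1 - c k - γ k))
    (hpCE : ∀ i, pCE i = b (i + 1) * c (i + 1) * (c i + γ i) /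
      ((c (i + 1) + γ (i + 1)) * c i)) :
    (∀ i, i + 1 < N → pV i = ((c i + γ i) / c i) *
      (v (i + 1) * c (i + 1) +
        (1 - (c (i + 1) + γ (i + 1))) * c (i + 1) * pV (i + 1) / (c (i + 1) + γ (i + 1)))) ∧
    (∀ i, i + 1 < N → pCE i = ((c i + γ i) / c i) *
      (v (i + 1) * c (i + 1) +
        (1 - (c (i + 1) + γ (i + 1))) * c (i + 1) * pCE (i + 1) / (c (i + 1) + γ (i + 1)))) ∧
    (∀ i, i < N → pCE i = pV i) ∧
    (∑ i ∈ Finset.range N, pCE i * c i * ∏ j ∈ Finset.range i, (1 - c j - γ j) =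
     ∑ i ∈ Finset.range N, pV i * c i * ∏ j ∈ Finset.range i, (1 - c j - γ j)) := by
  have hc0 : ∀ i, c i ≠ 0 := fun i => (hc i).ne'
  have hμ0 : ∀ i, c i + γ i ≠ 0 := fun i => (add_pos_of_pos_of_nonneg (hc i) (hγ i)).ne'
  obtain rfl : pV = vcgPayment N v c γ := funext hpV
  obtain rfl : pCE = cePayment b c γ := funext hpCE
  have hVrec : ∀ i, i + 1 < N → vcgPayment N v c γ i =
      paymentStep v c γ i (vcgPayment N v c γ (i + 1)) := fun i hi =>
    vcgPayment_eq_paymentStep (hc0 _) (hμ0 _) hi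
  have hCErec : ∀ i, i + 1 < N → cePayment b c γ i =
      paymentStep v c γ i (cePayment b c γ (i + 1)) := fun i hi =>
    cePayment_eq_paymentStep (hc0 _) (hμ0 _) (hb (i + 1) hi)
  have hlast : cePayment b c γ (N - 1) = vcgPayment N v c γ (N - 1) := by
    rw [cePayment_eq_zero (hbN _ (by omega)), vcgPayment_eq_zero (by omega)]
  have hpay := eq_of_backward_recursion (paymentStep v c γ) hCErec hVrec hlast
  exact ⟨hVrec, hCErec, hpay,
    sum_congr rfl fun i hi => by rw [hpay i (mem_range.mp hi)]⟩

/-- Equilibrium revenue equivalence with VCG (Theorem 5): with advertisers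
ordered in descending `vᵢcᵢ/μᵢ`, the truthful VCG per-click payment
`pᵢᵛ = (μᵢ/cᵢ)∑_{j>i} vⱼcⱼ∏_{i<k<j}(1−μₖ)` and the CE equilibrium payment
`pᵢᶜᴱ = b_{i+1}c_{i+1}μᵢ/(μ_{i+1}cᵢ)` (with equilibrium bids
`bᵢ = (μᵢ/cᵢ)[vᵢcᵢ + (1−μᵢ)b_{i+1}c_{i+1}/μ_{i+1}]`) satisfy the identical
recursion `pᵢ = (μᵢ/cᵢ)[v_{i+1}c_{i+1} + (1−μ_{i+1})c_{i+1}p_{i+1}/μ_{i+1}]`;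
hence the payments, and the search engine revenues, coincide. -/
theorem ce_equilibrium_revenue_equals_vcg (N : ℕ) (v c γ b : ℕ → ℝ)
    (pV pCE : ℕ → ℝ)
    (hv : ∀ i, 0 ≤ v i)
    (hc : ∀ i, 0 < c i) (hc1 : ∀ i, c i ≤ 1)
    (hγ : ∀ i, 0 ≤ γ i) (hμ : ∀ i, c i + γ i ≤ 1)
    (horder : ∀ i, v (i + 1) * c (i + 1) / (c (i + 1) + γ (i + 1)) ≤
      v i * c i / (c i + γ i))
    (hbN : ∀ i, N ≤ i → b i = 0)
    (hb : ∀ i, i < N → b i = ((c i + γ i) / c i) *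
      (v i * c i + (1 - (c i + γ i)) * b (i + 1) * c (i + 1) / (c (i + 1) + γ (i + 1))))
    (hpV : ∀ i, pV i = ((c i + γ i) / c i) *
      ∑ j ∈ Finset.Ico (i + 1) N, v j * c j *
        ∏ k ∈ Finset.Ico (i + 1) j, (1 - c k - γ k))
    (hpCE : ∀ i, pCE i = b (i + 1) * c (i + 1) * (c i + γ i) /
      ((c (i + 1) + γ (i + 1)) * c i)) :
    (∀ i, i + 1 < N → pV i = ((c i + γ i) / c i) *
      (v (i + 1) * c (i + 1) +
        (1 - (c (i + 1) + γ (i + 1))) * c (i + 1) * pV (i + 1) / (c (i + 1) + γ (i + 1)))) ∧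
    (∀ i, i + 1 < N → pCE i = ((c i + γ i) / c i) *
      (v (i + 1) * c (i + 1) +
        (1 - (c (i + 1) + γ (i + 1))) * c (i + 1) * pCE (i + 1) / (c (i + 1) + γ (i + 1)))) ∧
    (∀ i, i < N → pCE i = pV i) ∧
    (∑ i ∈ Finset.range N, pCE i * c i * ∏ j ∈ Finset.range i, (1 - c j - γ j) =
     ∑ i ∈ Finset.range N, pV i * c i * ∏ j ∈ Finset.range i, (1 - c j - γ j)) :=
  ce_equilibrium_revenue_equals_vcg_general N v c γ b pV pCE hc hγ hbN hb hpV hpCE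
end

section
/- The sum of advertiser revenues Σ_{i=1}^{N} v_{σ(i)} c_{σ(i)} Π_{j<i}(1−c_{σ(j)}−γ_{σ(j)}) over all permutations σ is maximized when σ sorts advertisers in descending order of c_i v_i/(c_i+γ_i); moreover this maximum value is an upper bound on the search engine's expected revenue under any individually rational ranking-and-pricing mechanism (where each advertiser's per-click payment is at most his private value). -/
/-!
Write `q = 1 - c - γ` and `r = c v / (c + γ)`, so that `v c = r (1 - q)`: ad `a` then contributes
`r a` times the probability that browsing ends at `a`. Under every order, browsing ends within
a set `A` of ads with probability at most `1 - ∏_{a ∈ A} q a`, and the index order attains this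
for every initial segment `A`. As `r` is antitone and nonnegative, Abel summation turns these
prefix inequalities into the revenue inequality; payments `p ≤ v` only lower the revenue.
-/

open Finset

section Majorization

variable {α R : Type*} [LinearOrder α] [CommRing R] [LinearOrder R] [IsStrictOrderedRing R]

theorem Finset.sum_mul_le_sum_mul_of_antitone_of_prefix_sum_le {r w w' : α → R} (s : Finset α)
    (hr : Antitone r) (hr0 : ∀ i ∈ s, 0 ≤ r i)
    (hw : ∀ k ∈ s, ∑ i ∈ s with i ≤ k, w i ≤ ∑ i ∈ s with i ≤ k, w' i) :
    ∑ i ∈ s, r i * w i ≤ ∑ i ∈ s, r i * w' i := by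
  induction s using Finset.induction_on_max generalizing r with
  | empty => simp
  | insert a s has ih =>
    have ha : a ∉ s := fun h => lt_irrefl a (has a h)
    have hprefix (k) (hk : k ∈ s) : {i ∈ insert a s | i ≤ k} = {i ∈ s | i ≤ k} := by
      rw [filter_insert, if_neg (not_le.2 (has k hk))]
    have htotal : {i ∈ insert a s | i ≤ a} = insert a s :=
      filter_true_of_mem fun i hi => (mem_insert.1 hi).elim le_of_eq fun h => (has i h).le
    have hsplit (u : α → R) : ∑ i ∈ insert a s, r i * u i
        = ∑ i ∈ s, (r i - r a) * u i + r a * ∑ i ∈ insert a s, u i := by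
      simp only [sum_insert ha, sub_mul, sum_sub_distrib, mul_add, mul_sum]
      ring
    -- `r - r a` is nonnegative on `s`, so the induction hypothesis applies to it.
    have hlower : ∑ i ∈ s, (r i - r a) * w i ≤ ∑ i ∈ s, (r i - r a) * w' i :=
      ih (fun _ _ h => sub_le_sub_right (hr h) _)
        (fun i hi => sub_nonneg.2 (hr (has i hi).le))
        (fun k hk => hprefix k hk ▸ hw k (mem_insert_of_mem hk))
    have htop : ∑ i ∈ insert a s, w i ≤ ∑ i ∈ insert a s, w' i :=
      htotal ▸ hw a (mem_insert_self a s)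
    rw [hsplit w, hsplit w']
    gcongr
    exact hr0 a (mem_insert_self a s)

end Majorization

section Cascade

variable {α R : Type*} [LinearOrder α] [CommRing R]

theorem Finset.sum_one_sub_mul_prod_lt (f : α → R) (T : Finset α) :
    ∑ i ∈ T, (1 - f i) * ∏ j ∈ T with j < i, f j = 1 - ∏ i ∈ T, f i := by
  have h := prod_one_sub_ordered T (fun i => 1 - f i)
  simp only [sub_sub_cancel] at h
  rw [h]
  ring

variable [Fintype α] {q : α → R}

variable (q) in
/-- The probability that browsing ends (by a click or by abandonment) at ad `a` when ad `σ i` is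
shown in position `i` and the user moves on past ad `j` with probability `q j`. -/
def cascadeWeight (σ : Equiv.Perm α) (a : α) : R :=
  (1 - q a) * ∏ j with j < σ.symm a, q (σ j)

theorem sum_mul_cascadeWeight (g : α → R) (σ : Equiv.Perm α) :
    ∑ a, g a * cascadeWeight q σ a = ∑ i, g (σ i) * ((1 - q (σ i)) * ∏ j with j < i, q (σ j)) := by
  rw [← Equiv.sum_comp σ]
  simp [cascadeWeight]

theorem sum_cascadeWeight_one_filter_le_eq (k : α) :
    ∑ a with a ≤ k, cascadeWeight q 1 a = 1 - ∏ a with a ≤ k, q a := by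
  rw [← sum_one_sub_mul_prod_lt]
  refine sum_congr rfl fun i hi => ?_
  have hik : i ≤ k := (mem_filter.1 hi).2
  simp only [cascadeWeight, filter_filter]
  congr 2
  exact filter_congr fun j _ => ⟨fun hj => ⟨(hj.trans_le hik).le, hj⟩, And.right⟩

variable [LinearOrder R] [IsStrictOrderedRing R]

theorem Finset.sum_one_sub_mul_prod_univ_lt_le (hq0 : ∀ i, 0 ≤ q i) (hq1 : ∀ i, q i ≤ 1)
    (T : Finset α) : ∑ i ∈ T, (1 - q i) * ∏ j with j < i, q j ≤ 1 - ∏ i ∈ T, q i := by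
  rw [← sum_one_sub_mul_prod_lt]
  refine sum_le_sum fun i _ => mul_le_mul_of_nonneg_left ?_ (sub_nonneg.2 (hq1 i))
  exact prod_le_prod_of_subset_of_le_one (filter_subset_filter _ (subset_univ T))
    (fun j _ => hq0 j) (fun j _ _ => hq1 j)

theorem sum_cascadeWeight_le (hq0 : ∀ i, 0 ≤ q i) (hq1 : ∀ i, q i ≤ 1) (σ : Equiv.Perm α)
    (A : Finset α) : ∑ a ∈ A, cascadeWeight q σ a ≤ 1 - ∏ a ∈ A, q a := by
  have hmem (i : α) : i ∈ ({i | σ i ∈ A} : Finset α) ↔ σ i ∈ A := by simp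
  have hsum : ∑ a ∈ A, cascadeWeight q σ a
      = ∑ i with σ i ∈ A, (1 - q (σ i)) * ∏ j with j < i, q (σ j) :=
    (sum_equiv σ hmem fun i _ => by simp [cascadeWeight]).symm
  rw [hsum, ← prod_equiv σ hmem fun _ _ => rfl]
  exact sum_one_sub_mul_prod_univ_lt_le (fun i => hq0 (σ i)) (fun i => hq1 (σ i)) _

theorem sum_mul_cascadeWeight_le_of_antitone {r : α → R} (hr : Antitone r) (hr0 : ∀ a, 0 ≤ r a)
    (hq0 : ∀ i, 0 ≤ q i) (hq1 : ∀ i, q i ≤ 1) (σ : Equiv.Perm α) :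
    ∑ a, r a * cascadeWeight q σ a ≤ ∑ a, r a * cascadeWeight q 1 a :=
  sum_mul_le_sum_mul_of_antitone_of_prefix_sum_le _ hr (fun a _ => hr0 a) fun k _ =>
    (sum_cascadeWeight_le hq0 hq1 σ _).trans_eq (sum_cascadeWeight_one_filter_le_eq k).symm

end Cascade

theorem social_revenue_upper_bound_general (N : ℕ) (v c γ : Fin N → ℝ)
    (hv : ∀ i, 0 ≤ v i) (hc : ∀ i, 0 < c i)
    (hγ : ∀ i, 0 ≤ γ i) (hμ : ∀ i, c i + γ i ≤ 1)
    (hsort : ∀ i j : Fin N, i ≤ j →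
      c j * v j / (c j + γ j) ≤ c i * v i / (c i + γ i)) :
    (∀ σ : Equiv.Perm (Fin N),
      ∑ i : Fin N, v (σ i) * c (σ i) *
          ∏ j ∈ Finset.univ.filter (fun j => j < i), (1 - c (σ j) - γ (σ j)) ≤
      ∑ i : Fin N, v i * c i *
          ∏ j ∈ Finset.univ.filter (fun j => j < i), (1 - c j - γ j)) ∧
    (∀ σ : Equiv.Perm (Fin N), ∀ p : Fin N → ℝ, (∀ i, p i ≤ v i) →
      ∑ i : Fin N, p (σ i) * c (σ i) *
          ∏ j ∈ Finset.univ.filter (fun j => j < i), (1 - c (σ j) - γ (σ j)) ≤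
      ∑ i : Fin N, v i * c i *
          ∏ j ∈ Finset.univ.filter (fun j => j < i), (1 - c j - γ j)) := by
  set q : Fin N → ℝ := fun i => 1 - c i - γ i
  set r : Fin N → ℝ := fun i => c i * v i / (c i + γ i)
  have hs (i) : 0 < c i + γ i := add_pos_of_pos_of_nonneg (hc i) (hγ i)
  have hvc (i) : v i * c i = r i * (1 - q i) := by
    simp only [q, r]
    field_simp [(hs i).ne']
    ring
  have hrevenue (σ : Equiv.Perm (Fin N)) : ∑ i, v (σ i) * c (σ i) * ∏ j with j < i, q (σ j)
      = ∑ a, r a * cascadeWeight q σ a := by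
    rw [sum_mul_cascadeWeight]
    exact sum_congr rfl fun i _ => by rw [hvc, mul_assoc]
  have hoptimal (σ : Equiv.Perm (Fin N)) : ∑ i, v (σ i) * c (σ i) * ∏ j with j < i, q (σ j)
      ≤ ∑ i, v i * c i * ∏ j with j < i, q j := by
    refine (hrevenue σ).trans_le (le_of_le_of_eq ?_ (hrevenue 1).symm)
    exact sum_mul_cascadeWeight_le_of_antitone (fun i j hij => hsort i j hij)
      (fun i => div_nonneg (mul_nonneg (hc i).le (hv i)) (hs i).le)
      (fun i => by linarith [hμ i]) (fun i => by linarith [hc i, hγ i]) σ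
  refine ⟨hoptimal, fun σ p hp => le_trans ?_ (hoptimal σ)⟩
  gcongr with i _
  · exact prod_nonneg fun j _ => by linarith [hμ (σ j)]
  · exact (hc _).le
  · exact hp _

/-- Revenue upper bound (Remarks 3 and 4): the total advertiser revenue
`∑ᵢ v_{σ(i)}c_{σ(i)}∏_{j<i}(1−c_{σ(j)}−γ_{σ(j)})` is maximized over all
permutations `σ` by the order descending in `cᵢvᵢ/(cᵢ+γᵢ)` (taken here to be the
index order), and this maximum bounds the search engine's expected revenue under
any individually rational ranking-and-pricing mechanism (per-click payments
`pᵢ ≤ vᵢ`). -/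
theorem social_revenue_upper_bound (N : ℕ) (v c γ : Fin N → ℝ)
    (hv : ∀ i, 0 ≤ v i) (hc : ∀ i, 0 < c i) (hc1 : ∀ i, c i ≤ 1)
    (hγ : ∀ i, 0 ≤ γ i) (hμ : ∀ i, c i + γ i ≤ 1)
    (hsort : ∀ i j : Fin N, i ≤ j →
      c j * v j / (c j + γ j) ≤ c i * v i / (c i + γ i)) :
    (∀ σ : Equiv.Perm (Fin N),
      ∑ i : Fin N, v (σ i) * c (σ i) *
          ∏ j ∈ Finset.univ.filter (fun j => j < i), (1 - c (σ j) - γ (σ j)) ≤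
      ∑ i : Fin N, v i * c i *
          ∏ j ∈ Finset.univ.filter (fun j => j < i), (1 - c j - γ j)) ∧
    (∀ σ : Equiv.Perm (Fin N), ∀ p : Fin N → ℝ, (∀ i, p i ≤ v i) →
      ∑ i : Fin N, p (σ i) * c (σ i) *
          ∏ j ∈ Finset.univ.filter (fun j => j < i), (1 - c (σ j) - γ (σ j)) ≤
      ∑ i : Fin N, v i * c i *
          ∏ j ∈ Finset.univ.filter (fun j => j < i), (1 - c j - γ j)) :=
  social_revenue_upper_bound_general N v c γ hv hc hγ hμ hsort
end
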